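/- arXiv:1901.01947 — 15 statements merged into one kernel-verified Lean document; each statement's English description precedes it below -/
import Mathlib

section
/- For positive integers x, y, z, equality gcd(x,y) * gcd(y,z) = y * gcd(gcd(x,y),z) holds if and only if gcd(gcd(x,y),z) * y divides x * z. -/
theorem gcd4 (a b c d : ℕ) :
    Nat.gcd (Nat.gcd a b) (Nat.gcd c d) = Nat.gcd (Nat.gcd a (Nat.gcd b d)) c := by
  rw [Nat.gcd_assoc a, Nat.gcd_comm c d, ← Nat.gcd_assoc b d c, ← Nat.gcd_assoc a]

theorem gcd_mul_gcd_eq_iff (x y z : ℕ) (hx : 0 < x) (hy : 0 < y) (hz : 0 < z) :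
    Nat.gcd x y * Nat.gcd y z = y * Nat.gcd (Nat.gcd x y) z ↔
      Nat.gcd (Nat.gcd x y) z * y ∣ x * z := by
  have key : Nat.gcd x y * Nat.gcd y z
      = Nat.gcd (y * Nat.gcd (Nat.gcd x y) z) (x * z) := by
    calc Nat.gcd x y * Nat.gcd y z
        = Nat.gcd (Nat.gcd x y * y) (Nat.gcd x y * z) :=
          (Nat.gcd_mul_left _ _ _).symm
      _ = Nat.gcd (Nat.gcd (x * y) (y * y)) (Nat.gcd (x * z) (y * z)) := by
          rw [← Nat.gcd_mul_right, ← Nat.gcd_mul_right]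
      _ = Nat.gcd (Nat.gcd (y * x) (Nat.gcd (y * y) (y * z))) (x * z) := by
          rw [gcd4, mul_comm x y]
      _ = Nat.gcd (y * Nat.gcd x (Nat.gcd y z)) (x * z) := by
          rw [Nat.gcd_mul_left, Nat.gcd_mul_left]
      _ = Nat.gcd (y * Nat.gcd (Nat.gcd x y) z) (x * z) := by
          rw [Nat.gcd_assoc]
  constructor
  · intro h
    rw [mul_comm, ← h, key]
    exact Nat.gcd_dvd_right _ _
  · intro h
    rw [key, Nat.gcd_eq_left (by rwa [mul_comm] at h)]
end

section
/- If positive integers a, b, c satisfy gcd(a,b) * gcd(b,c) = b * gcd(a,c), then gcd(a,c) = gcd(gcd(a,b),c). -/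
theorem gcd_eq_gcd_three (a b c : ℕ) (ha : 0 < a) (hb : 0 < b) (hc : 0 < c)
    (h : Nat.gcd a b * Nat.gcd b c = b * Nat.gcd a c) :
    Nat.gcd a c = Nat.gcd (Nat.gcd a b) c := by
  set d := Nat.gcd a c with hd
  set x := Nat.gcd a b with hx
  set y := Nat.gcd b c with hy
  -- lcm x y divides b
  have hlcm : Nat.lcm x y ∣ b := Nat.lcm_dvd (Nat.gcd_dvd_right a b) (Nat.gcd_dvd_left b c)
  obtain ⟨k, hk⟩ := hlcm
  have hxy : x * y = Nat.gcd x y * Nat.lcm x y := (Nat.gcd_mul_lcm x y).symm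
  have hlpos : 0 < Nat.lcm x y := Nat.pos_of_ne_zero (by
    intro h0
    rw [h0, zero_mul] at hk
    exact hb.ne' hk)
  have hkey : Nat.gcd x y = k * d := by
    have : Nat.gcd x y * Nat.lcm x y = Nat.lcm x y * (k * d) := by
      rw [← hxy, h, hk]; ring
    exact Nat.eq_of_mul_eq_mul_left hlpos (by linarith [this, mul_comm (Nat.gcd x y) (Nat.lcm x y)])
  have hdb : d ∣ b := by
    have h1 : d ∣ Nat.gcd x y := ⟨k, by rw [hkey, mul_comm]⟩
    exact h1.trans ((Nat.gcd_dvd_left x y).trans (Nat.gcd_dvd_right a b))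
  apply Nat.dvd_antisymm
  · exact Nat.dvd_gcd (Nat.dvd_gcd (Nat.gcd_dvd_left a c) hdb) (Nat.gcd_dvd_right a c)
  · exact Nat.dvd_gcd ((Nat.gcd_dvd_left x c).trans (Nat.gcd_dvd_left a b)) (Nat.gcd_dvd_right x c)
end

section
/- For positive integers a, b, c with d = gcd(gcd(a,b),c), the condition (gcd(a,c) = d and d*b divides a*c) holds if and only if gcd(a,b) * gcd(b,c) = b * gcd(a,c). -/
private lemma dvd_iff_fact (m n : ℕ) (hm : m ≠ 0) (hn : n ≠ 0) :
    m ∣ n ↔ ∀ p, m.factorization p ≤ n.factorization p := by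
  rw [← Nat.factorization_le_iff_dvd hm hn, Finsupp.le_def]

private lemma eq_iff_fact (m n : ℕ) (hm : m ≠ 0) (hn : n ≠ 0) :
    m = n ↔ ∀ p, m.factorization p = n.factorization p := by
  constructor
  · rintro rfl p; rfl
  · intro h
    exact Nat.dvd_antisymm ((dvd_iff_fact m n hm hn).2 fun p => (h p).le)
      ((dvd_iff_fact n m hn hm).2 fun p => (h p).ge)

theorem gcd_cond_iff (a b c : ℕ) (ha : 0 < a) (hb : 0 < b) (hc : 0 < c)
    (d : ℕ) (hd : d = Nat.gcd (Nat.gcd a b) c) :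
    (Nat.gcd a c = d ∧ d * b ∣ a * c) ↔
      Nat.gcd a b * Nat.gcd b c = b * Nat.gcd a c := by
  subst hd
  have ha' := ha.ne'
  have hb' := hb.ne'
  have hc' := hc.ne'
  have hab : Nat.gcd a b ≠ 0 := Nat.gcd_ne_zero_left ha'
  have hbc : Nat.gcd b c ≠ 0 := Nat.gcd_ne_zero_left hb'
  have hac : Nat.gcd a c ≠ 0 := Nat.gcd_ne_zero_left ha'
  have habc : Nat.gcd (Nat.gcd a b) c ≠ 0 := Nat.gcd_ne_zero_left hab
  rw [eq_iff_fact _ _ hac habc, dvd_iff_fact _ _ (mul_ne_zero habc hb') (mul_ne_zero ha' hc'),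
    eq_iff_fact _ _ (mul_ne_zero hab hbc) (mul_ne_zero hb' hac)]
  simp only [Nat.factorization_mul hab hbc, Nat.factorization_mul hb' hac,
    Nat.factorization_mul habc hb', Nat.factorization_mul ha' hc',
    Nat.factorization_gcd ha' hb', Nat.factorization_gcd hb' hc',
    Nat.factorization_gcd ha' hc', Nat.factorization_gcd hab hc',
    Finsupp.add_apply, Finsupp.inf_apply]
  constructor
  · rintro ⟨h1, h2⟩ p
    have := h1 p; have := h2 p; omega
  · intro h
    exact ⟨fun p => by have := h p; omega, fun p => by have := h p; omega⟩
end

section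
/- Let a, b, c be positive integers satisfying gcd(a,b) * gcd(b,c) = b * gcd(a,c). Then the 3×3 matrix S with entries S i j = gcd(x_i, x_j), where (x_1,x_2,x_3) = (a,b,c), is totally nonnegative, i.e., every square minor (of size 1, 2, or 3) is nonnegative. -/
/-- A real matrix is totally nonnegative if every square minor is nonnegative. -/
def TotallyNonneg {n : ℕ} (A : Matrix (Fin n) (Fin n) ℝ) : Prop :=
  ∀ (k : ℕ) (r c : Fin k → Fin n), StrictMono r → StrictMono c →
    0 ≤ (A.submatrix r c).det

lemma strictMono_fin2_fin3 (r : Fin 2 → Fin 3) (hr : StrictMono r) :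
    (r 0 = 0 ∧ r 1 = 1) ∨ (r 0 = 0 ∧ r 1 = 2) ∨ (r 0 = 1 ∧ r 1 = 2) := by
  have h01 : (r 0 : ℕ) < (r 1 : ℕ) := hr (by decide)
  have h0 := (r 0).isLt
  have h1 := (r 1).isLt
  have : ((r 0 : ℕ) = 0 ∧ (r 1 : ℕ) = 1) ∨ ((r 0 : ℕ) = 0 ∧ (r 1 : ℕ) = 2) ∨
      ((r 0 : ℕ) = 1 ∧ (r 1 : ℕ) = 2) := by omega
  rcases this with ⟨p, q⟩ | ⟨p, q⟩ | ⟨p, q⟩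
  · exact Or.inl ⟨Fin.ext p, Fin.ext q⟩
  · exact Or.inr (Or.inl ⟨Fin.ext p, Fin.ext q⟩)
  · exact Or.inr (Or.inr ⟨Fin.ext p, Fin.ext q⟩)

lemma strictMono_fin3_fin3 (r : Fin 3 → Fin 3) (hr : StrictMono r) :
    r 0 = 0 ∧ r 1 = 1 ∧ r 2 = 2 := by
  have h01 : (r 0 : ℕ) < (r 1 : ℕ) := hr (by decide)
  have h12 : (r 1 : ℕ) < (r 2 : ℕ) := hr (by decide)
  have h0 := (r 0).isLt
  have h2 := (r 2).isLt
  exact ⟨Fin.ext (by omega), Fin.ext (by omega), Fin.ext (by omega)⟩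

set_option maxHeartbeats 1600000 in
theorem gcd_matrix_three_TN (a b c : ℕ) (ha : 0 < a) (hb : 0 < b) (hc : 0 < c)
    (h : Nat.gcd a b * Nat.gcd b c = b * Nat.gcd a c)
    (x : Fin 3 → ℕ) (hx : x = ![a, b, c])
    (S : Matrix (Fin 3) (Fin 3) ℝ)
    (hS : ∀ i j, S i j = (Nat.gcd (x i) (x j) : ℝ)) :
    TotallyNonneg S := by
  subst hx
  -- abbreviations for matrix entries
  have hx0 : (![a, b, c] : Fin 3 → ℕ) 0 = a := rfl
  have hx1 : (![a, b, c] : Fin 3 → ℕ) 1 = b := rfl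
  have hx2 : (![a, b, c] : Fin 3 → ℕ) 2 = c := rfl
  set A : ℝ := (a : ℝ) with hA
  set B : ℝ := (b : ℝ) with hB
  set C : ℝ := (c : ℝ) with hC
  set G1 : ℝ := (Nat.gcd a b : ℝ) with hG1
  set G2 : ℝ := (Nat.gcd b c : ℝ) with hG2
  set G3 : ℝ := (Nat.gcd a c : ℝ) with hG3
  have hS00 : S 0 0 = A := by rw [hS]; simp [Nat.gcd_self, hA]
  have hS01 : S 0 1 = G1 := by rw [hS]; rfl
  have hS02 : S 0 2 = G3 := by rw [hS]; rfl
  have hS10 : S 1 0 = G1 := by rw [hS]; rw [show (![a,b,c] : Fin 3 → ℕ) 1 = b from rfl, show (![a,b,c] : Fin 3 → ℕ) 0 = a from rfl, Nat.gcd_comm]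
  have hS11 : S 1 1 = B := by rw [hS]; simp [Nat.gcd_self, hB]
  have hS12 : S 1 2 = G2 := by rw [hS]; rfl
  have hS20 : S 2 0 = G3 := by rw [hS]; rw [show (![a,b,c] : Fin 3 → ℕ) 2 = c from rfl, show (![a,b,c] : Fin 3 → ℕ) 0 = a from rfl, Nat.gcd_comm]
  have hS21 : S 2 1 = G2 := by rw [hS]; rw [show (![a,b,c] : Fin 3 → ℕ) 2 = c from rfl, show (![a,b,c] : Fin 3 → ℕ) 1 = b from rfl, Nat.gcd_comm]
  have hS22 : S 2 2 = C := by rw [hS]; simp [Nat.gcd_self, hC]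
  -- key facts
  have hBpos : (0:ℝ) < B := by rw [hB]; exact_mod_cast hb
  have hG1n : 0 ≤ G1 := by positivity
  have hG2n : 0 ≤ G2 := by positivity
  have hG3n : 0 ≤ G3 := by positivity
  have hAn : 0 ≤ A := by positivity
  have hCn : 0 ≤ C := by positivity
  have hprod : G1 * G2 = B * G3 := by
    rw [hG1, hG2, hB, hG3]; exact_mod_cast h
  have hq1 : G1 * G1 ≤ A * B := by
    rw [hG1, hA, hB]
    exact_mod_cast Nat.mul_le_mul (Nat.le_of_dvd ha (Nat.gcd_dvd_left a b))
      (Nat.le_of_dvd hb (Nat.gcd_dvd_right a b))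
  have hq2 : G2 * G2 ≤ B * C := by
    rw [hG2, hB, hC]
    exact_mod_cast Nat.mul_le_mul (Nat.le_of_dvd hb (Nat.gcd_dvd_left b c))
      (Nat.le_of_dvd hc (Nat.gcd_dvd_right b c))
  have hq3 : G3 * G3 ≤ A * C := by
    rw [hG3, hA, hC]
    exact_mod_cast Nat.mul_le_mul (Nat.le_of_dvd ha (Nat.gcd_dvd_left a c))
      (Nat.le_of_dvd hc (Nat.gcd_dvd_right a c))
  intro k r cc hr hcc
  have hk : k ≤ 3 := by
    have := Fintype.card_le_of_injective r hr.injective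
    simpa using this
  interval_cases k
  · simp [Matrix.det_fin_zero]
  · rw [show (S.submatrix r cc).det = S (r 0) (cc 0) from Matrix.det_fin_one _]
    rw [hS]; positivity
  · rw [Matrix.det_fin_two]
    simp only [Matrix.submatrix_apply]
    rcases strictMono_fin2_fin3 r hr with ⟨e0, e1⟩ | ⟨e0, e1⟩ | ⟨e0, e1⟩ <;>
      rcases strictMono_fin2_fin3 cc hcc with ⟨f0, f1⟩ | ⟨f0, f1⟩ | ⟨f0, f1⟩ <;>
      rw [e0, e1, f0, f1] <;>
      simp only [hS00, hS01, hS02, hS10, hS11, hS12, hS20, hS21, hS22] <;>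
      nlinarith [mul_nonneg (sub_nonneg.2 hq1) hG2n, mul_nonneg (sub_nonneg.2 hq2) hG1n,
        mul_nonneg (sub_nonneg.2 hq1) hG3n, mul_nonneg (sub_nonneg.2 hq2) hG3n,
        mul_nonneg hG1n hG2n, mul_nonneg hG1n hG3n, mul_nonneg hG2n hG3n,
        sub_nonneg.2 hq1, sub_nonneg.2 hq2, sub_nonneg.2 hq3]
  · rw [Matrix.det_fin_three]
    simp only [Matrix.submatrix_apply]
    obtain ⟨e0, e1, e2⟩ := strictMono_fin3_fin3 r hr
    obtain ⟨f0, f1, f2⟩ := strictMono_fin3_fin3 cc hcc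
    rw [e0, e1, e2, f0, f1, f2]
    simp only [hS00, hS01, hS02, hS10, hS11, hS12, hS20, hS21, hS22]
    nlinarith [mul_nonneg (sub_nonneg.2 hq1) (sub_nonneg.2 hq2), hprod,
      mul_nonneg hG1n hG2n, mul_nonneg (mul_nonneg hG1n hG2n) hG3n, sq_nonneg (G1*G2 - B*G3)]
end

section
/- Let a, b, c be distinct positive integers and suppose the GCD matrix on (a,b,c) is totally nonnegative. Then gcd(a,b) * gcd(b,c) = b * gcd(a,c). -/
theorem Nat.gcd_mul_gcd_dvd_mul_gcd (a b c : ℕ) : gcd a b * gcd b c ∣ b * gcd a c := by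
  have hab : gcd a b * gcd b c ∣ b * a :=
    (mul_dvd_mul (gcd_dvd_left a b) (gcd_dvd_left b c)).trans (dvd_of_eq (mul_comm a b))
  have hbc : gcd a b * gcd b c ∣ b * c :=
    mul_dvd_mul (gcd_dvd_right a b) (gcd_dvd_right b c)
  simpa only [gcd_mul_left] using dvd_gcd hab hbc

theorem TotallyNonneg.mul_le_mul {n : ℕ} {A : Matrix (Fin n) (Fin n) ℝ} (hA : TotallyNonneg A)
    {i i' j j' : Fin n} (hi : i < i') (hj : j < j') :
    A i j' * A i' j ≤ A i j * A i' j' := by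
  have hminor := hA 2 ![i, i'] ![j, j'] (by simpa using hi) (by simpa using hj)
  simp only [Matrix.det_fin_two, Matrix.submatrix_apply, Matrix.cons_val_zero,
    Matrix.cons_val_one] at hminor
  linarith

theorem gcd_matrix_three_TN_implies_general (a b c : ℕ) (ha : 0 < a) (hb : 0 < b)
    (x : Fin 3 → ℕ) (hx : x = ![a, b, c])
    (S : Matrix (Fin 3) (Fin 3) ℝ)
    (hS : ∀ i j, S i j = (Nat.gcd (x i) (x j) : ℝ))
    (hTN : TotallyNonneg S) :
    Nat.gcd a b * Nat.gcd b c = b * Nat.gcd a c := by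
  subst hx
  have hminor : (Nat.gcd a c * b : ℝ) ≤ Nat.gcd a b * Nat.gcd b c := by
    simpa [hS] using hTN.mul_le_mul (i := 0) (i' := 1) (j := 1) (j' := 2) (by decide) (by decide)
  have hge : b * Nat.gcd a c ≤ Nat.gcd a b * Nat.gcd b c := by
    rw [mul_comm]; exact_mod_cast hminor
  have hle : Nat.gcd a b * Nat.gcd b c ≤ b * Nat.gcd a c :=
    Nat.le_of_dvd (Nat.mul_pos hb (Nat.gcd_pos_of_pos_left c ha)) (Nat.gcd_mul_gcd_dvd_mul_gcd a b c)
  exact le_antisymm hle hge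

theorem gcd_matrix_three_TN_implies (a b c : ℕ) (ha : 0 < a) (hb : 0 < b) (hc : 0 < c)
    (hab : a ≠ b) (hbc : b ≠ c) (hac : a ≠ c)
    (x : Fin 3 → ℕ) (hx : x = ![a, b, c])
    (S : Matrix (Fin 3) (Fin 3) ℝ)
    (hS : ∀ i j, S i j = (Nat.gcd (x i) (x j) : ℝ))
    (hTN : TotallyNonneg S) :
    Nat.gcd a b * Nat.gcd b c = b * Nat.gcd a c :=
  gcd_matrix_three_TN_implies_general a b c ha hb x hx S hS hTN
end

section
/- Let X = (x_1,...,x_n) be a vector of positive integers such that for all 1 ≤ i ≤ j ≤ k ≤ n, gcd(x_i,x_j) * gcd(x_j,x_k) = x_j * gcd(x_i,x_k). Then for all 1 ≤ i ≤ j ≤ k ≤ l ≤ n, gcd(x_i,x_k) * gcd(x_j,x_l) = gcd(x_i,x_l) * gcd(x_j,x_k). -/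
theorem gcd_four_index_identity (n : ℕ) (x : Fin n → ℕ) (hx : ∀ i, 0 < x i)
    (h : ∀ i j k : Fin n, i ≤ j → j ≤ k →
      Nat.gcd (x i) (x j) * Nat.gcd (x j) (x k) = x j * Nat.gcd (x i) (x k)) :
    ∀ i j k l : Fin n, i ≤ j → j ≤ k → k ≤ l →
      Nat.gcd (x i) (x k) * Nat.gcd (x j) (x l)
        = Nat.gcd (x i) (x l) * Nat.gcd (x j) (x k) := by
  intro i j k l hij hjk hkl
  have h1 := h j k l hjk hkl
  have h2 := h i k l (hij.trans hjk) hkl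
  apply Nat.eq_of_mul_eq_mul_left (hx k)
  calc x k * (Nat.gcd (x i) (x k) * Nat.gcd (x j) (x l))
      = (x k * Nat.gcd (x j) (x l)) * Nat.gcd (x i) (x k) := by ring
    _ = (Nat.gcd (x j) (x k) * Nat.gcd (x k) (x l)) * Nat.gcd (x i) (x k) := by rw [h1]
    _ = (Nat.gcd (x i) (x k) * Nat.gcd (x k) (x l)) * Nat.gcd (x j) (x k) := by ring
    _ = (x k * Nat.gcd (x i) (x l)) * Nat.gcd (x j) (x k) := by rw [h2]
    _ = x k * (Nat.gcd (x i) (x l) * Nat.gcd (x j) (x k)) := by ring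
end

section
/- Let X = (x_1,...,x_n) be a vector of positive integers such that for all 1 ≤ i ≤ j ≤ k ≤ n, gcd(x_i,x_j) * gcd(x_j,x_k) = x_j * gcd(x_i,x_k). Then for all 1 ≤ i ≤ j ≤ n, gcd(x_i,x_j) * gcd(x_1,x_n) = gcd(x_1,x_j) * gcd(x_i,x_n); in particular the GCD matrix S(X) is a Green's matrix with p_i = gcd(x_i,x_n)/gcd(x_1,x_n) and q_j = gcd(x_1,x_j). -/
theorem gcd_matrix_is_Green (n : ℕ) (x : Fin (n + 1) → ℕ) (hx : ∀ i, 0 < x i)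
    (h : ∀ i j k : Fin (n + 1), i ≤ j → j ≤ k →
      Nat.gcd (x i) (x j) * Nat.gcd (x j) (x k) = x j * Nat.gcd (x i) (x k)) :
    (∀ i j : Fin (n + 1), i ≤ j →
      Nat.gcd (x i) (x j) * Nat.gcd (x 0) (x (Fin.last n))
        = Nat.gcd (x 0) (x j) * Nat.gcd (x i) (x (Fin.last n))) ∧
    (∀ i j : Fin (n + 1),
      (Nat.gcd (x i) (x j) : ℝ) =
        (fun i : Fin (n + 1) => (Nat.gcd (x i) (x (Fin.last n)) : ℝ) /
          (Nat.gcd (x 0) (x (Fin.last n)) : ℝ)) (min i j) *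
        (fun j : Fin (n + 1) => (Nat.gcd (x 0) (x j) : ℝ)) (max i j)) := by
  have key : ∀ i j : Fin (n + 1), i ≤ j →
      Nat.gcd (x i) (x j) * Nat.gcd (x 0) (x (Fin.last n))
        = Nat.gcd (x 0) (x j) * Nat.gcd (x i) (x (Fin.last n)) := by
    intro i j hij
    have h1 := h i j (Fin.last n) hij (Fin.le_last j)
    have h2 := h 0 j (Fin.last n) (Fin.zero_le j) (Fin.le_last j)
    have hpos : 0 < Nat.gcd (x j) (x (Fin.last n)) :=
      Nat.gcd_pos_of_pos_left _ (hx j)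
    apply Nat.eq_of_mul_eq_mul_right hpos
    calc Nat.gcd (x i) (x j) * Nat.gcd (x 0) (x (Fin.last n)) * Nat.gcd (x j) (x (Fin.last n))
        = (Nat.gcd (x i) (x j) * Nat.gcd (x j) (x (Fin.last n))) * Nat.gcd (x 0) (x (Fin.last n)) := by ring
      _ = (x j * Nat.gcd (x i) (x (Fin.last n))) * Nat.gcd (x 0) (x (Fin.last n)) := by rw [h1]
      _ = (x j * Nat.gcd (x 0) (x (Fin.last n))) * Nat.gcd (x i) (x (Fin.last n)) := by ring
      _ = (Nat.gcd (x 0) (x j) * Nat.gcd (x j) (x (Fin.last n))) * Nat.gcd (x i) (x (Fin.last n)) := by rw [h2]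
      _ = Nat.gcd (x 0) (x j) * Nat.gcd (x i) (x (Fin.last n)) * Nat.gcd (x j) (x (Fin.last n)) := by ring
  refine ⟨key, ?_⟩
  have hden : (Nat.gcd (x 0) (x (Fin.last n)) : ℝ) ≠ 0 := by
    exact_mod_cast (Nat.gcd_pos_of_pos_left _ (hx 0)).ne'
  have main : ∀ i j : Fin (n + 1), i ≤ j →
      (Nat.gcd (x i) (x j) : ℝ) =
        (Nat.gcd (x i) (x (Fin.last n)) : ℝ) /
          (Nat.gcd (x 0) (x (Fin.last n)) : ℝ) * (Nat.gcd (x 0) (x j) : ℝ) := by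
    intro i j hij
    have := key i j hij
    field_simp
    rw [mul_comm ((Nat.gcd (x 0) (x j)):ℕ)] at this
    exact_mod_cast this
  intro i j
  rcases le_total i j with hij | hij
  · simp only [min_eq_left hij, max_eq_right hij]
    exact main i j hij
  · simp only [min_eq_right hij, max_eq_left hij]
    rw [Nat.gcd_comm]
    exact main j i hij
end

section
/- If an n×n matrix A has entries a_{ij} = p_{min(i,j)} * q_{max(i,j)} for positive reals p_1,...,p_n, q_1,...,q_n satisfying p_1/q_1 ≤ p_2/q_2 ≤ ... ≤ p_n/q_n, then A is totally nonnegative. -/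
lemma min_sub_min_of_le {R : Type*} [AddCommGroup R] [LinearOrder R] [IsOrderedAddMonoid R]
    {a b c : R} (hcb : c ≤ b) : min b a - min c a = min (b - c) (max a c - c) := by
  rcases le_total a c with hac | hca
  · simp [min_eq_right hac, min_eq_right (hac.trans hcb), max_eq_right hac, sub_nonneg.2 hcb]
  · simp [min_eq_left hca, max_eq_left hca, min_sub_sub_right]

namespace Matrix

variable {R : Type*} [LinearOrder R]

def minKernel {m n : Type*} (x : m → R) (y : n → R) : Matrix m n R :=
  of fun i j => min (x i) (y j)

@[simp]
lemma minKernel_apply {m n : Type*} (x : m → R) (y : n → R) (i : m) (j : n) :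
    minKernel x y i j = min (x i) (y j) :=
  rfl

lemma transpose_minKernel {m n : Type*} (x : m → R) (y : n → R) :
    (minKernel x y)ᵀ = minKernel y x := by
  ext i j
  simp [min_comm]

variable [CommRing R] [IsStrictOrderedRing R]

lemma det_minKernel_succ {k : ℕ} {x y : Fin (k + 1) → R} (hx : Monotone x) (h0 : y 0 ≤ x 0) :
    (minKernel x y).det =
      y 0 * (minKernel (fun i : Fin k => x i.succ - x 0)
        (fun j : Fin k => max (y j.succ) (x 0) - x 0)).det := by
  set B : Matrix (Fin (k + 1)) (Fin (k + 1)) R :=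
    of fun i j => if i = 0 then min (x 0) (y j) else min (x i) (y j) - min (x 0) (y j)
  have hB : (minKernel x y).det = B.det :=
    det_eq_of_forall_row_eq_smul_add_const (fun i => if i = 0 then 0 else 1) 0 (by simp)
      fun i j => by by_cases hi : i = 0 <;> simp [B, hi]
  have hB_col : ∀ i : Fin k, B i.succ 0 = 0 := fun i => by
    simp [B, min_eq_right h0, min_eq_right (h0.trans (hx (Fin.zero_le _)))]
  have hB_sub : B.submatrix Fin.succ Fin.succ =
      minKernel (fun i : Fin k => x i.succ - x 0)
        (fun j : Fin k => max (y j.succ) (x 0) - x 0) := by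
    ext i j
    simp [B, min_sub_min_of_le (hx (Fin.zero_le i.succ))]
  rw [hB, det_succ_column_zero, Fin.sum_univ_succ]
  simp [hB_col, hB_sub, B, min_eq_right h0]

theorem det_minKernel_nonneg {k : ℕ} {x y : Fin k → R} (hx : Monotone x) (hy : Monotone y)
    (hx0 : ∀ i, 0 ≤ x i) (hy0 : ∀ j, 0 ≤ y j) : 0 ≤ (minKernel x y).det := by
  induction k with
  | zero => simp
  | succ k ih =>
    wlog h0 : y 0 ≤ x 0 generalizing x y
    · rw [← det_transpose, transpose_minKernel]
      exact this hy hx hy0 hx0 (le_of_not_ge h0)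
    rw [det_minKernel_succ hx h0]
    refine mul_nonneg (hy0 0) (ih ?_ ?_ ?_ ?_)
    · exact fun i j hij => sub_le_sub_right (hx (Fin.succ_le_succ_iff.2 hij)) _
    · exact fun i j hij =>
        sub_le_sub_right (max_le_max_right _ (hy (Fin.succ_le_succ_iff.2 hij))) _
    · exact fun i => sub_nonneg.2 (hx (Fin.zero_le _))
    · exact fun j => sub_nonneg.2 (le_max_right _ _)

end Matrix

open Matrix

theorem totallyNonneg_of_apply_eq_mul_mul_min {n : ℕ} {M : Matrix (Fin n) (Fin n) ℝ}
    {q x : Fin n → ℝ} (hq : ∀ i, 0 ≤ q i) (hx : Monotone x) (hx0 : ∀ i, 0 ≤ x i)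
    (hM : ∀ i j, M i j = q i * q j * min (x i) (x j)) : TotallyNonneg M := by
  intro k r c hr hc
  have hsub : M.submatrix r c =
      diagonal (q ∘ r) * minKernel (x ∘ r) (x ∘ c) * diagonal (q ∘ c) := by
    ext i j
    simp only [submatrix_apply, hM, mul_diagonal, diagonal_mul, Function.comp_apply,
      minKernel_apply]
    ring
  rw [hsub, det_mul, det_mul, det_diagonal, det_diagonal]
  have hdet := det_minKernel_nonneg (hx.comp hr.monotone) (hx.comp hc.monotone)
    (fun i => hx0 (r i)) (fun j => hx0 (c j))
  have hq_prod {m : ℕ} (s : Fin m → Fin n) : 0 ≤ ∏ i, (q ∘ s) i :=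
    Finset.prod_nonneg fun i _ => hq (s i)
  exact mul_nonneg (mul_nonneg (hq_prod r) hdet) (hq_prod c)

theorem green_matrix_TN (n : ℕ) (p q : Fin n → ℝ)
    (hp : ∀ i, 0 < p i) (hq : ∀ i, 0 < q i)
    (hratio : ∀ i j : Fin n, i ≤ j → p i / q i ≤ p j / q j)
    (A : Matrix (Fin n) (Fin n) ℝ)
    (hA : ∀ i j, A i j = p (min i j) * q (max i j)) :
    TotallyNonneg A := by
  refine totallyNonneg_of_apply_eq_mul_mul_min (x := fun i => p i / q i) (fun i => (hq i).le)
    (fun i j => hratio i j) (fun i => (div_pos (hp i) (hq i)).le) fun i j => ?_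
  rw [hA]
  rcases le_total i j with hij | hji
  · rw [min_eq_left hij, max_eq_right hij, min_eq_left (hratio i j hij)]
    field_simp [(hq i).ne', (hq j).ne']
  · rw [min_eq_right hji, max_eq_left hji, min_eq_right (hratio j i hji)]
    field_simp [(hq i).ne', (hq j).ne']
end

section
/- Let A be a Green's matrix with entries a_{ij} = p_{min(i,j)} * q_{max(i,j)}, let α = {i_1 < ... < i_m} and β = {j_1 < ... < j_m} be index sets, and set k_s = min(i_s,j_s), l_s = max(i_s,j_s). If max(i_s,j_s) < min(i_{s+1},j_{s+1}) for all 1 ≤ s ≤ m-1, then det A[α,β] = p_{k_1} * q_{l_m} * ∏_{s=1}^{m-1} (p_{k_{s+1}} q_{l_s} - p_{l_s} q_{k_{s+1}}). -/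
/-!
Expand the minor along its second row. When `r 0 ≤ c 0`, the separation makes the first row
`p (r 0) • (q ∘ c)` and the second row agree with `p (r 1) • (q ∘ c)` from the third column on, so
subtracting `p (r 1) • (q ∘ c)` leaves at most two entries in the second row. Both complementary
minors are again separated Green minors, and the claimed product satisfies the same two-term
recursion by a three-term Plücker identity; the case `c 0 < r 0` follows by transposing.
-/

open Matrix

namespace Matrix

variable {R : Type*} [CommRing R]

-- `w` itself need not be a row, so this is not `det_updateRow_add_smul_self`: no division by `a`.
theorem det_updateRow_sub_smul_of_row_eq_smul {n : Type*} [Fintype n] [DecidableEq n]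
    (M : Matrix n n R) {i k : n} (hik : i ≠ k) {w : n → R} {a : R} (hk : M k = a • w) (b : R) :
    (M.updateRow i (M i - b • w)).det = M.det := by
  have hw : (M.updateRow i w).det = 0 := by
    set N := M.updateRow i w
    have hNk : N k = a • w := by simp [N, updateRow_ne hik.symm, hk]
    rw [← updateRow_eq_self N k, hNk, det_updateRow_smul,
      det_zero_of_row_eq hik (by simp [updateRow_ne hik, N]), mul_zero]
  rw [sub_eq_add_neg, ← neg_smul, det_updateRow_add, det_updateRow_smul, hw, updateRow_eq_self,
    mul_zero, add_zero]

theorem det_eq_of_row_zero_eq_smul {m : ℕ} (M : Matrix (Fin (m + 2)) (Fin (m + 2)) R)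
    {w : Fin (m + 2) → R} {a b : R} (h0 : M 0 = a • w)
    (h1 : ∀ t : Fin m, M 1 t.succ.succ = b * w t.succ.succ) :
    M.det = -(M 1 0 - b * w 0) * (M.submatrix (Fin.succAbove 1) Fin.succ).det +
      (M 1 1 - b * w 1) * (M.submatrix (Fin.succAbove 1) (Fin.succAbove 1)).det := by
  set N := M.updateRow 1 (M 1 - b • w)
  have hminor (τ : Fin (m + 1) → Fin (m + 2)) : N.submatrix (Fin.succAbove 1) τ =
      M.submatrix (Fin.succAbove 1) τ := by
    ext s t
    simp [N]
  rw [← det_updateRow_sub_smul_of_row_eq_smul M (Fin.succ_ne_zero 0) h0 b,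
    det_succ_row _ 1, Fin.sum_univ_succ, Fin.sum_univ_succ]
  simp [N, h1, hminor]

end Matrix

section Separated

variable {κ ι : Type*} [LinearOrder ι]

def Separated [Preorder κ] (r c : κ → ι) : Prop :=
  ∀ ⦃s t⦄, s < t → max (r s) (c s) < min (r t) (c t)

section Preorder

variable [Preorder κ] {r c : κ → ι}

theorem Separated.symm (h : Separated r c) : Separated c r := by
  intro s t hst
  rw [max_comm, min_comm]
  exact h hst

theorem Separated.left_lt_left (h : Separated r c) {s t : κ} (hst : s < t) : r s < r t :=
  (le_max_left _ _).trans_lt ((h hst).trans_le (min_le_left _ _))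

theorem Separated.left_lt_right (h : Separated r c) {s t : κ} (hst : s < t) : r s < c t :=
  (le_max_left _ _).trans_lt ((h hst).trans_le (min_le_right _ _))

end Preorder

theorem Separated.comp {κ' : Type*} [LinearOrder κ] [Preorder κ'] {r c : κ → ι}
    (h : Separated r c) {σ τ : κ' → κ} (hστ : Separated σ τ) : Separated (r ∘ σ) (c ∘ τ) := by
  intro s t hst
  have h' := hστ hst
  simp only [Function.comp_apply, max_lt_iff, lt_min_iff] at h' ⊢
  exact ⟨⟨h.left_lt_left h'.1.1, h.symm.left_lt_right h'.1.2⟩,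
    ⟨h.left_lt_right h'.2.1, h.symm.left_lt_left h'.2.2⟩⟩

theorem StrictMono.separated [Preorder κ] {σ : κ → ι} (hσ : StrictMono σ) : Separated σ σ := by
  intro s t hst
  simpa using hσ hst

theorem separated_of_max_lt_min_succ {m : ℕ} {r c : Fin (m + 1) → ι}
    (h : ∀ s : Fin m, max (r s.castSucc) (c s.castSucc) < min (r s.succ) (c s.succ)) :
    Separated r c := by
  have hmono : StrictMono fun s => min (r s) (c s) :=
    Fin.strictMono_iff_lt_succ.2 fun s => (min_le_max).trans_lt (h s)
  intro s t hst
  obtain ⟨s, rfl⟩ := Fin.exists_castSucc_eq.2 (Fin.ne_last_of_lt hst)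
  exact (h s).trans_le (hmono.monotone (Fin.castSucc_lt_iff_succ_le.1 hst))

theorem separated_succAbove_one_succ (m : ℕ) :
    Separated (Fin.succAbove (1 : Fin (m + 2))) Fin.succ := by
  intro s t hst
  obtain ⟨t, rfl⟩ := Fin.exists_succ_eq.2 (Fin.ne_zero_of_lt hst)
  rw [Fin.one_succAbove_succ, min_self]
  rcases Fin.eq_zero_or_eq_succ s with rfl | ⟨s, rfl⟩
  · simpa [Fin.one_succAbove_zero] using Fin.one_lt_succ_succ t
  · simpa [Fin.one_succAbove_succ] using hst

end Separated

section Green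

variable {ι R : Type*} [LinearOrder ι] [CommRing R] (p q : ι → R)

def greenMatrix : Matrix ι ι R :=
  Matrix.of fun i j => p (min i j) * q (max i j)

theorem greenMatrix_apply_of_le {i j : ι} (h : i ≤ j) : greenMatrix p q i j = p i * q j := by
  simp [greenMatrix, h]

theorem greenMatrix_apply_of_ge {i j : ι} (h : j ≤ i) : greenMatrix p q i j = p j * q i := by
  simp [greenMatrix, h]

theorem greenMatrix_transpose : (greenMatrix p q)ᵀ = greenMatrix p q := by
  ext i j
  simp [greenMatrix, min_comm, max_comm]

def greenMinorValue {m : ℕ} (r c : Fin (m + 1) → ι) : R :=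
  p (min (r 0) (c 0)) * q (max (r (Fin.last m)) (c (Fin.last m))) *
    ∏ s : Fin m, (p (min (r s.succ) (c s.succ)) * q (max (r s.castSucc) (c s.castSucc)) -
      p (max (r s.castSucc) (c s.castSucc)) * q (min (r s.succ) (c s.succ)))

theorem greenMinorValue_comm {m : ℕ} (r c : Fin (m + 1) → ι) :
    greenMinorValue p q c r = greenMinorValue p q r c := by
  simp only [greenMinorValue, min_comm (c _), max_comm (c _)]


theorem greenMinorValue_expand_of_le {m : ℕ} {r c : Fin (m + 2) → ι} (hsep : Separated r c)
    (h0 : r 0 ≤ c 0) :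
    greenMinorValue p q r c =
      -(greenMatrix p q (r 1) (c 0) - p (r 1) * q (c 0)) *
          greenMinorValue p q (r ∘ Fin.succAbove 1) (c ∘ Fin.succ) +
        (greenMatrix p q (r 1) (c 1) - p (r 1) * q (c 1)) *
          greenMinorValue p q (r ∘ Fin.succAbove 1) (c ∘ Fin.succAbove 1) := by
  have h01 : (0 : Fin (m + 2)) < 1 := Fin.zero_lt_one
  rw [greenMatrix_apply_of_ge p q (hsep.symm.left_lt_right h01).le]
  have hr0c1 := hsep.left_lt_right h01
  rcases le_total (r 1) (c 1) with h1 | h1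
  all_goals cases m with
  | zero =>
    simp [greenMinorValue, h0, hr0c1.le, h1, greenMatrix_apply_of_le, greenMatrix_apply_of_ge]
    ring
  | succ m =>
    have hlast : Fin.succAbove (1 : Fin (m + 3)) (Fin.last (m + 1)) = Fin.last (m + 2) := by
      rw [← Fin.succ_last, Fin.one_succAbove_succ, Fin.succ_last, Fin.succ_last]
    simp [greenMinorValue, Fin.prod_univ_succ, h0, hr0c1.le, h1, hlast, greenMatrix_apply_of_le,
      greenMatrix_apply_of_ge]
    ring

theorem det_submatrix_greenMatrix {m : ℕ} {r c : Fin (m + 1) → ι} (hsep : Separated r c) :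
    ((greenMatrix p q).submatrix r c).det = greenMinorValue p q r c := by
  induction m with
  | zero => simp [det_unique, greenMinorValue, greenMatrix]
  | succ m ih =>
    wlog h0 : r 0 ≤ c 0 generalizing r c
    · rw [← det_transpose, transpose_submatrix, greenMatrix_transpose, ← greenMinorValue_comm]
      exact this hsep.symm (le_of_not_ge h0)
    have hrow0 : (greenMatrix p q).submatrix r c 0 = p (r 0) • (q ∘ c) := by
      funext t
      obtain rfl | ht := eq_or_ne t 0
      · exact greenMatrix_apply_of_le p q h0
      · exact greenMatrix_apply_of_le p q (hsep.left_lt_right (Fin.pos_iff_ne_zero.2 ht)).le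
    have hrow1 (t : Fin m) : (greenMatrix p q).submatrix r c 1 t.succ.succ =
        p (r 1) * q (c t.succ.succ) :=
      greenMatrix_apply_of_le p q (hsep.left_lt_right (Fin.one_lt_succ_succ t)).le
    rw [det_eq_of_row_zero_eq_smul _ hrow0 hrow1, submatrix_submatrix, submatrix_submatrix,
      ih (hsep.comp (separated_succAbove_one_succ m)),
      ih (hsep.comp (Fin.strictMono_succAbove 1).separated)]
    exact (greenMinorValue_expand_of_le p q hsep h0).symm

end Green

theorem green_matrix_minor_formula_general (n m : ℕ) (p q : Fin n → ℝ)
    (A : Matrix (Fin n) (Fin n) ℝ)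
    (hA : ∀ i j, A i j = p (min i j) * q (max i j))
    (r c : Fin (m + 1) → Fin n)
    (hsep : ∀ s : Fin m, max (r s.castSucc) (c s.castSucc) < min (r s.succ) (c s.succ)) :
    (A.submatrix r c).det =
      p (min (r 0) (c 0)) * q (max (r (Fin.last m)) (c (Fin.last m))) *
        ∏ s : Fin m,
          (p (min (r s.succ) (c s.succ)) * q (max (r s.castSucc) (c s.castSucc)) -
            p (max (r s.castSucc) (c s.castSucc)) * q (min (r s.succ) (c s.succ))) := by
  obtain rfl : A = greenMatrix p q := Matrix.ext hA
  exact det_submatrix_greenMatrix p q (separated_of_max_lt_min_succ hsep)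

theorem green_matrix_minor_formula (n m : ℕ) (p q : Fin n → ℝ)
    (A : Matrix (Fin n) (Fin n) ℝ)
    (hA : ∀ i j, A i j = p (min i j) * q (max i j))
    (r c : Fin (m + 1) → Fin n) (hr : StrictMono r) (hc : StrictMono c)
    (hsep : ∀ s : Fin m, max (r s.castSucc) (c s.castSucc) < min (r s.succ) (c s.succ)) :
    (A.submatrix r c).det =
      p (min (r 0) (c 0)) * q (max (r (Fin.last m)) (c (Fin.last m))) *
        ∏ s : Fin m,
          (p (min (r s.succ) (c s.succ)) * q (max (r s.castSucc) (c s.castSucc)) -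
            p (max (r s.castSucc) (c s.castSucc)) * q (min (r s.succ) (c s.succ))) :=
  green_matrix_minor_formula_general n m p q A hA r c hsep
end

section
/- Let A be a Green's matrix with entries a_{ij} = p_{min(i,j)} * q_{max(i,j)}, and let α = {i_1 < ... < i_m}, β = {j_1 < ... < j_m}. If there exists some s with max(i_s,j_s) ≥ min(i_{s+1},j_{s+1}), then det A[α,β] = 0. -/
/-!
If `r (s+1) ≤ c s`, then every selected row up to `s+1` meets every selected column from `s` on
weakly above the diagonal, so there the minor agrees with the rank-one matrix `p (r i) * q (c j)`.
A rank-one block of size `(s + 2) × (m + 1 - s)` in an `(m + 1) × (m + 1)` matrix forces the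
determinant to vanish. The other alternative, `c (s+1) ≤ r s`, is the same situation for the
transpose, and a Green's matrix is symmetric.
-/

open Finset Submodule

namespace Matrix

variable {ι K : Type*} [Fintype ι] [Field K]

theorem det_eq_zero_of_col_mem_span [DecidableEq ι] (M : Matrix ι ι K) (T : Finset (ι → K))
    (hT : #T < Fintype.card ι) (hcol : ∀ j, M.col j ∈ span K (T : Set (ι → K))) :
    M.det = 0 := by
  by_contra hdet
  have hrank : M.rank ≤ #T := by
    rw [rank_eq_finrank_span_cols]
    exact (Submodule.finrank_mono (span_le.mpr (Set.range_subset_iff.mpr hcol))).trans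
      (finrank_span_finset_le_card T)
  rw [rank_of_isUnit M ((isUnit_iff_isUnit_det M).mpr (isUnit_iff_ne_zero.mpr hdet))] at hrank
  omega

/-- The columns indexed by `J` lie in the span of `u` cut down to `I` and the unit vectors off `I`;
with the columns off `J` that gives fewer than `card ι` spanning vectors. -/
theorem det_eq_zero_of_rankOne_block [DecidableEq ι] (M : Matrix ι ι K) (I J : Finset ι)
    (u v : ι → K) (hblock : ∀ i ∈ I, ∀ j ∈ J, M i j = u i * v j)
    (hcard : Fintype.card ι + 1 < #I + #J) : M.det = 0 := by
  classical
  set w : ι → K := fun i => if i ∈ I then u i else 0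
  set T : Finset (ι → K) := Jᶜ.image M.col ∪ {w} ∪ Iᶜ.image (fun k => Pi.single k 1)
  refine M.det_eq_zero_of_col_mem_span T ?_ fun j => ?_
  · calc #T ≤ #Jᶜ + 1 + #Iᶜ := by
          grw [card_union_le, card_union_le, card_image_le, card_image_le, card_singleton]
      _ < Fintype.card ι := by
          rw [card_compl, card_compl]
          have := card_le_univ I
          have := card_le_univ J
          omega
  by_cases hj : j ∈ J
  · have hdecomp : M.col j = v j • w + ∑ k ∈ Iᶜ, M k j • Pi.single k 1 := by
      funext i
      by_cases hi : i ∈ I <;>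
        simp [w, hi, hblock i _ j hj, Pi.single_apply, mul_comm]
    rw [hdecomp]
    refine add_mem (smul_mem _ _ (subset_span ?_))
      (sum_mem fun k hk => smul_mem _ _ (subset_span ?_))
    · exact mem_coe.mpr (mem_union_left _ (mem_union_right _ (mem_singleton_self w)))
    · exact mem_coe.mpr (mem_union_right _ (mem_image_of_mem _ hk))
  · exact subset_span (mem_coe.mpr (mem_union_left _ (mem_union_left _
      (mem_image_of_mem _ (mem_compl.mpr hj)))))

end Matrix

theorem green_submatrix_det_eq_zero_of_le {ι K : Type*} [LinearOrder ι] [Field K] {n : ℕ}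
    (p q : ι → K) (A : Matrix ι ι K) (hA : ∀ i j, A i j = p (min i j) * q (max i j))
    {r c : Fin (n + 1) → ι} (hr : Monotone r) (hc : Monotone c) (s : Fin n)
    (hrc : r s.succ ≤ c s.castSucc) : (A.submatrix r c).det = 0 := by
  refine Matrix.det_eq_zero_of_rankOne_block _ (Iic s.succ) (Ici s.castSucc)
    (p ∘ r) (q ∘ c) (fun i hi j hj => ?_) (by simp; omega)
  have hle : r i ≤ c j :=
    (hr (mem_Iic.mp hi)).trans (hrc.trans (hc (mem_Ici.mp hj)))
  simp [hA, min_eq_left hle, max_eq_right hle]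

theorem green_matrix_minor_vanishes (n m : ℕ) (p q : Fin n → ℝ)
    (A : Matrix (Fin n) (Fin n) ℝ)
    (hA : ∀ i j, A i j = p (min i j) * q (max i j))
    (r c : Fin (m + 1) → Fin n) (hr : StrictMono r) (hc : StrictMono c)
    (hsep : ∃ s : Fin m, min (r s.succ) (c s.succ) ≤ max (r s.castSucc) (c s.castSucc)) :
    (A.submatrix r c).det = 0 := by
  obtain ⟨s, hs⟩ := hsep
  have hrs := hr s.castSucc_lt_succ
  have hcs := hc s.castSucc_lt_succ
  have key : r s.succ ≤ c s.castSucc ∨ c s.succ ≤ r s.castSucc := by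
    rcases min_le_iff.mp hs with h | h <;> rcases le_max_iff.mp h with h | h <;> order
  rcases key with h | h
  · exact green_submatrix_det_eq_zero_of_le p q A hA hr.monotone hc.monotone s h
  · have hA_symm : A.IsSymm := .ext fun i j => by simp [hA, min_comm, max_comm]
    rw [← Matrix.det_transpose, Matrix.transpose_submatrix, hA_symm.eq]
    exact green_submatrix_det_eq_zero_of_le p q A hA hc.monotone hr.monotone s h
end

section
/- Let p be a prime and x_i = p^{α_i} for i = 1,...,n with α_i nonnegative integers. The GCD matrix S(x_1,...,x_n) is totally nonnegative if and only if the sequence (α_i)_{i=1}^n is monotonic (either non-decreasing or non-increasing). -/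
open Matrix

lemma Nat.gcd_pow_pow (p a b : ℕ) : Nat.gcd (p ^ a) (p ^ b) = p ^ min a b := by
  rcases le_total a b with h | h
  · rw [Nat.gcd_eq_left (pow_dvd_pow p h), min_eq_left h]
  · rw [Nat.gcd_eq_right (pow_dvd_pow p h), min_eq_right h]

lemma min_add_min_lt_of_dent {a b c : ℕ} (h : a < b ∧ c < b ∨ b < a ∧ b < c) :
    min a b + min b c < min a c + b := by
  omega

section MinMatrix

variable {ι R m n : Type*} [LinearOrder ι]

def minMatrix (g : ι → R) (b : m → ι) (c : n → ι) : Matrix m n R :=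
  of fun i j => g (min (b i) (c j))

@[simp]
lemma minMatrix_apply (g : ι → R) (b : m → ι) (c : n → ι) (i : m) (j : n) :
    minMatrix g b c i j = g (min (b i) (c j)) :=
  rfl

lemma submatrix_minMatrix {m' n' : Type*} (g : ι → R) (b : m → ι) (c : n → ι)
    (r : m' → m) (s : n' → n) :
    (minMatrix g b c).submatrix r s = minMatrix g (b ∘ r) (c ∘ s) :=
  rfl

lemma transpose_minMatrix (g : ι → R) (b : m → ι) (c : n → ι) :
    (minMatrix g b c)ᵀ = minMatrix g c b := by
  ext i j
  simp [min_comm]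

variable [CommRing R]

lemma map_min_sub_map_min_of_le {g : ι → R} {x y z : ι} (hzx : z ≤ x) :
    g (min x y) - g (min z y) = g (max (min x y) z) - g z := by
  rcases le_total y z with hyz | hzy
  · simp [min_eq_right (hyz.trans hzx), min_eq_right hyz, max_eq_right hyz]
  · simp [min_eq_left hzy, max_eq_left (le_min hzx hzy)]

lemma det_minMatrix_succ {k : ℕ} (g : ι → R) {b c : Fin (k + 1) → ι} (hb : Monotone b)
    (hc : c 0 ≤ b 0) :
    (minMatrix g b c).det = g (c 0) *
      (minMatrix (fun t ↦ g (max t (b 0)) - g (b 0)) (b ∘ Fin.succ) (c ∘ Fin.succ)).det := by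
  set h : ι → R := fun t ↦ g (max t (b 0)) - g (b 0)
  -- `B` is the min-matrix with its row `0` subtracted from every other row.
  let B : Matrix (Fin (k + 1)) (Fin (k + 1)) R :=
    of (Fin.cons (fun j ↦ g (min (b 0) (c j))) fun i j ↦ h (min (b i.succ) (c j)))
  have hB : (minMatrix g b c).det = B.det := by
    refine det_eq_of_forall_row_eq_smul_add_const (Fin.cons 0 fun _ ↦ 1) 0 rfl fun i j ↦ ?_
    cases i using Fin.cases with
    | zero => simp [B]
    | succ i =>
      simp only [minMatrix_apply, B, h, of_apply, Fin.cons_succ, Fin.cons_zero, one_mul,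
        ← map_min_sub_map_min_of_le (hb (Fin.zero_le i.succ))]
      ring
  have hB_col : ∀ i : Fin k, B i.succ 0 = 0 := fun i ↦ by
    simp [B, h, min_eq_right (hc.trans (hb (Fin.zero_le i.succ))), max_eq_right hc]
  rw [hB, det_succ_column_zero, Fin.sum_univ_succ]
  simp only [hB_col, mul_zero, zero_mul, Finset.sum_const_zero, add_zero, Fin.val_zero, pow_zero,
    one_mul, Fin.succAbove_zero]
  congr 1
  simp [B, min_eq_right hc]

variable [PartialOrder R] [IsOrderedRing R]

lemma det_minMatrix_nonneg {k : ℕ} {g : ι → R} (hg₀ : 0 ≤ g) (hg : Monotone g)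
    {b c : Fin k → ι} (hb : Monotone b) (hc : Monotone c) : 0 ≤ (minMatrix g b c).det := by
  induction k generalizing g with
  | zero => simp
  | succ k ih =>
    have key : ∀ {b c : Fin (k + 1) → ι}, Monotone b → Monotone c → c 0 ≤ b 0 →
        0 ≤ (minMatrix g b c).det := fun {b c} hb hc hcb ↦ by
      rw [det_minMatrix_succ g hb hcb]
      refine mul_nonneg (hg₀ _) (ih (fun t ↦ sub_nonneg.2 (hg (le_max_right _ _)))
        (fun s t hst ↦ sub_le_sub_right (hg (max_le_max_right _ hst)) _)
        (hb.comp Fin.strictMono_succ.monotone) (hc.comp Fin.strictMono_succ.monotone))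
    rcases le_total (c 0) (b 0) with hcb | hbc
    · exact key hb hc hcb
    · rw [← det_transpose, transpose_minMatrix]
      exact key hc hb hbc

lemma det_minMatrix_nonneg_of_antitone {k : ℕ} {g : ι → R} (hg₀ : 0 ≤ g) (hg : Monotone g)
    {b c : Fin k → ι} (hb : Antitone b) (hc : Antitone c) : 0 ≤ (minMatrix g b c).det := by
  rw [← det_submatrix_equiv_self Fin.revPerm, submatrix_minMatrix]
  exact det_minMatrix_nonneg hg₀ hg (hb.comp Fin.rev_anti) (hc.comp Fin.rev_anti)

end MinMatrix

lemma totallyNonneg_minMatrix {ι : Type*} [LinearOrder ι] {n : ℕ} {g : ι → ℝ} (hg₀ : 0 ≤ g)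
    (hg : Monotone g) {a : Fin n → ι} (ha : Monotone a ∨ Antitone a) :
    TotallyNonneg (minMatrix g a a) := by
  intro k r c hr hc
  rw [submatrix_minMatrix]
  rcases ha with ha | ha
  · exact det_minMatrix_nonneg hg₀ hg (ha.comp hr.monotone) (ha.comp hc.monotone)
  · exact det_minMatrix_nonneg_of_antitone hg₀ hg (ha.comp_monotone hr.monotone)
      (ha.comp_monotone hc.monotone)

lemma monotone_or_antitone_of_totallyNonneg_minMatrix_pow {n : ℕ} {q : ℝ} (hq : 1 < q)
    {a : Fin n → ℕ} (h : TotallyNonneg (minMatrix (q ^ ·) a a)) : Monotone a ∨ Antitone a := by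
  by_contra hna
  obtain ⟨i, j, k, hij, hjk, hdent⟩ :=
    not_monotone_not_antitone_iff_exists_lt_lt.1 (not_or.1 hna)
  have hminor := h 2 ![i, j] ![j, k] (Fin.strictMono_iff_lt_succ.2 (by simpa))
    (Fin.strictMono_iff_lt_succ.2 (by simpa))
  rw [det_fin_two] at hminor
  simp only [submatrix_apply, minMatrix_apply, Matrix.cons_val_zero, Matrix.cons_val_one,
    min_self, ← pow_add] at hminor
  linarith [pow_lt_pow_right₀ hq (min_add_min_lt_of_dent hdent)]

theorem gcd_matrix_prime_powers_TN_iff (n : ℕ) (p : ℕ) (hp : p.Prime)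
    (α : Fin n → ℕ) (x : Fin n → ℕ) (hx : ∀ i, x i = p ^ α i)
    (S : Matrix (Fin n) (Fin n) ℝ)
    (hS : ∀ i j, S i j = (Nat.gcd (x i) (x j) : ℝ)) :
    TotallyNonneg S ↔ (Monotone α ∨ Antitone α) := by
  have hp₁ : (1 : ℝ) < p := by exact_mod_cast hp.one_lt
  have hS_min : S = minMatrix ((p : ℝ) ^ ·) α α := by
    ext i j
    simp [hS, hx, Nat.gcd_pow_pow]
  rw [hS_min]
  refine ⟨monotone_or_antitone_of_totallyNonneg_minMatrix_pow hp₁, totallyNonneg_minMatrix ?_ ?_⟩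
  · exact fun t ↦ pow_nonneg (zero_le_one.trans hp₁.le) t
  · exact fun s t hst ↦ pow_le_pow_right₀ hp₁.le hst
end

section
/- Let x_1,...,x_n be positive integers and for each prime p let e_p(x) denote the exponent of p in the prime factorization of x. The GCD matrix S(x_1,...,x_n) is totally nonnegative if and only if for each prime p the sequence (e_p(x_i))_{i=1}^n is monotonic (non-decreasing or non-increasing). -/
/-!
If every valuation `e_p` is monotone or antitone along `x`, comparing valuations one prime at a
time gives `gcd(x₀, xₙ) · gcd(xᵢ, xⱼ) = gcd(xᵢ, xₙ) · gcd(x₀, xⱼ)` for `i ≤ j`. So `S` is a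
single-pair matrix `S i j = u (min i j) * v (max i j)` with `u / v` nondecreasing, i.e.
`S = D M D` with `D` a positive diagonal matrix and `M i j = m (min i j)` for a nondecreasing
`m ≥ 0`. The minors of `M` are the determinants of `m (min (s i) (t j))` with `s, t` monotone.
When `t 0 ≤ s 0` (otherwise transpose), subtracting the first row from the others leaves the
single nonzero entry `m (t 0)` in the first column, and a matrix of the same shape for
`a ↦ m a - m (min a (s 0))`, which is again nondecreasing and nonnegative.

Conversely, if some `e_p` has a strict peak or valley at `j` with `i < j < k`, the `2 × 2` minor
on rows `i, j` and columns `j, k` is `gcd(xᵢ, xⱼ) gcd(xⱼ, xₖ) - gcd(xᵢ, xₖ) xⱼ`. The first product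
always divides the second, and here its `p`-adic valuation is strictly smaller, so the minor is
negative.
-/

open Matrix

namespace Nat

theorem eq_of_factorization_prime_eq {a b : ℕ} (ha : a ≠ 0) (hb : b ≠ 0)
    (h : ∀ p, p.Prime → a.factorization p = b.factorization p) : a = b :=
  dvd_antisymm ((factorization_prime_le_iff_dvd ha hb).1 fun p hp => (h p hp).le)
    ((factorization_prime_le_iff_dvd hb ha).1 fun p hp => (h p hp).ge)

theorem factorization_gcd_apply {a b : ℕ} (ha : a ≠ 0) (hb : b ≠ 0) (p : ℕ) :
    (gcd a b).factorization p = min (a.factorization p) (b.factorization p) := by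
  rw [factorization_gcd ha hb, Finsupp.inf_apply]

theorem factorization_gcd_mul_gcd_apply {a b c d : ℕ} (ha : a ≠ 0) (hb : b ≠ 0) (hc : c ≠ 0)
    (hd : d ≠ 0) (p : ℕ) :
    (gcd a b * gcd c d).factorization p =
      min (a.factorization p) (b.factorization p) +
        min (c.factorization p) (d.factorization p) := by
  rw [factorization_mul (gcd_ne_zero_left ha) (gcd_ne_zero_left hc), Finsupp.add_apply,
    factorization_gcd_apply ha hb, factorization_gcd_apply hc hd]

theorem gcd_mul_gcd_lt_gcd_mul {a b c p : ℕ} (ha : a ≠ 0) (hb : b ≠ 0) (hc : c ≠ 0)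
    (hdent : a.factorization p < b.factorization p ∧ c.factorization p < b.factorization p ∨
      b.factorization p < a.factorization p ∧ b.factorization p < c.factorization p) :
    gcd a b * gcd b c < gcd a c * b := by
  have hb' : gcd a c * b = gcd a c * gcd b b := by rw [gcd_self]
  have hfac := factorization_gcd_mul_gcd_apply ha hb hb hc
  have hfac' := factorization_gcd_mul_gcd_apply ha hc hb hb
  have hdvd : gcd a b * gcd b c ∣ gcd a c * b := by
    rw [hb']
    refine (factorization_prime_le_iff_dvd (by positivity) (by positivity)).1 fun q _ => ?_
    rw [hfac, hfac']
    omega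
  have hne : gcd a b * gcd b c ≠ gcd a c * b := fun h => by
    have := congrArg (·.factorization p) (h.trans hb')
    simp only [hfac, hfac'] at this
    omega
  exact (le_of_dvd (by positivity) hdvd).lt_of_ne hne

end Nat

def MonotoneValuations {ι : Type*} [Preorder ι] (x : ι → ℕ) : Prop :=
  ∀ p, p.Prime →
    Monotone (fun i => (x i).factorization p) ∨ Antitone (fun i => (x i).factorization p)

section MonotoneValuations

variable {ι : Type*} [Preorder ι] {x : ι → ℕ}

theorem gcd_mul_gcd_eq_of_le (hx : ∀ i, x i ≠ 0) (hmono : MonotoneValuations x)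
    {i j k l : ι} (hij : i ≤ j) (hjk : j ≤ k) (hkl : k ≤ l) :
    Nat.gcd (x i) (x l) * Nat.gcd (x j) (x k) = Nat.gcd (x j) (x l) * Nat.gcd (x i) (x k) := by
  refine Nat.eq_of_factorization_prime_eq (by simp [hx]) (by simp [hx]) fun p hp => ?_
  simp only [Nat.factorization_gcd_mul_gcd_apply (hx _) (hx _) (hx _) (hx _)]
  rcases hmono p hp with h | h <;>
  · have := h hij; have := h hjk; have := h hkl
    dsimp only at *
    omega

theorem gcd_dvd_gcd_of_le_left (hx : ∀ i, x i ≠ 0) (hmono : MonotoneValuations x)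
    {i j k : ι} (hij : i ≤ j) (hjk : j ≤ k) :
    Nat.gcd (x i) (x k) ∣ Nat.gcd (x j) (x k) := by
  refine (Nat.factorization_prime_le_iff_dvd (by simp [hx]) (by simp [hx])).1 fun p hp => ?_
  simp only [Nat.factorization_gcd_apply (hx _) (hx _)]
  rcases hmono p hp with h | h <;>
  · have := h hij; have := h hjk
    dsimp only at *
    omega

theorem gcd_dvd_gcd_of_le_right (hx : ∀ i, x i ≠ 0) (hmono : MonotoneValuations x)
    {i j k : ι} (hij : i ≤ j) (hjk : j ≤ k) :
    Nat.gcd (x i) (x k) ∣ Nat.gcd (x i) (x j) := by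
  refine (Nat.factorization_prime_le_iff_dvd (by simp [hx]) (by simp [hx])).1 fun p hp => ?_
  simp only [Nat.factorization_gcd_apply (hx _) (hx _)]
  rcases hmono p hp with h | h <;>
  · have := h hij; have := h hjk
    dsimp only at *
    omega

end MonotoneValuations

section MinKernel

variable {α R : Type*} [LinearOrder α] [CommRing R] [LinearOrder R] [IsStrictOrderedRing R]

theorem Monotone.sub_comp_min {m : α → R} (hm : Monotone m) (c : α) :
    Monotone fun a => m a - m (min a c) := by
  intro a b hab
  dsimp only
  rcases le_total b c with hbc | hcb
  · simp [min_eq_left hbc, min_eq_left (hab.trans hbc)]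
  rw [min_eq_right hcb]
  rcases le_total a c with hac | hca
  · rw [min_eq_left hac, sub_self]
    exact sub_nonneg.2 (hm hcb)
  · rw [min_eq_right hca]
    exact sub_le_sub_right (hm hab) _

theorem sub_comp_min_nonneg {m : α → R} (hm : Monotone m) (c a : α) :
    0 ≤ m a - m (min a c) :=
  sub_nonneg.2 (hm (min_le_left a c))

theorem det_comp_min_eq_mul_det_succ {k : ℕ} (m : α → R) {s t : Fin (k + 1) → α}
    (hs : Monotone s) (hts : t 0 ≤ s 0) :
    (of fun i j => m (min (s i) (t j))).det =
      m (t 0) * (of fun i j : Fin k => m (min (s i.succ) (t j.succ)) -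
        m (min (min (s i.succ) (t j.succ)) (s 0))).det := by
  set m' := fun u => m u - m (min u (s 0))
  -- the matrix after subtracting row `0` from every other row
  let B : Matrix (Fin (k + 1)) (Fin (k + 1)) R :=
    of fun i j => Fin.cases (m (min (s 0) (t j))) (fun i => m' (min (s i.succ) (t j))) i
  have hs0 : ∀ i, s 0 ≤ s i := fun i => hs (Fin.zero_le i)
  rw [det_eq_of_forall_row_eq_smul_add_const (B := B) (Fin.cases 0 1) 0 rfl ?_,
    det_succ_column_zero, Fin.sum_univ_succ]
  · have hcol : ∀ i : Fin k, B i.succ 0 = 0 := fun i => by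
      simp [B, m', min_assoc, min_eq_left (hts.trans (hs0 _)), min_eq_right hts]
    simp [hcol, B, min_eq_right hts]
    exact Or.inl rfl
  · intro i j
    cases i using Fin.cases with
    | zero => simp [B]
    | succ i =>
      have : min (s i.succ) (min (t j) (s 0)) = min (s 0) (t j) := by
        rw [min_eq_right ((min_le_right _ _).trans (hs0 _)), min_comm]
      simp [B, m', min_assoc, this]

theorem det_comp_min_nonneg {k : ℕ} {m : α → R} (hm : Monotone m) (hm0 : ∀ a, 0 ≤ m a)
    {s t : Fin k → α} (hs : Monotone s) (ht : Monotone t) :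
    0 ≤ (of fun i j => m (min (s i) (t j))).det := by
  induction k generalizing m with
  | zero => simp
  | succ k ih =>
    wlog hts : t 0 ≤ s 0 generalizing s t
    · rw [← det_transpose]
      simpa [transpose, min_comm] using this ht hs (le_of_not_ge hts)
    rw [det_comp_min_eq_mul_det_succ m hs hts]
    exact mul_nonneg (hm0 _) (ih (hm.sub_comp_min (s 0)) (sub_comp_min_nonneg hm (s 0))
      (hs.comp Fin.strictMono_succ.monotone) (ht.comp Fin.strictMono_succ.monotone))

end MinKernel

theorem TotallyNonneg.mul_diag_le_mul {n : ℕ} {S : Matrix (Fin n) (Fin n) ℝ}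
    (hS : TotallyNonneg S) {i j k : Fin n} (hij : i < j) (hjk : j < k) :
    S i k * S j j ≤ S i j * S j k := by
  have h := hS 2 ![i, j] ![j, k] (by simp [Fin.strictMono_iff_lt_succ, hij])
    (by simp [Fin.strictMono_iff_lt_succ, hjk])
  rw [det_fin_two] at h
  simp only [submatrix_apply, cons_val_zero, cons_val_one] at h
  linarith

theorem totallyNonneg_of_eq_mul_min_max {n : ℕ} {S : Matrix (Fin n) (Fin n) ℝ}
    {u v : Fin n → ℝ} (hu : ∀ i, 0 ≤ u i) (hv : ∀ i, 0 < v i)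
    (huv : ∀ i j, i ≤ j → u i * v j ≤ u j * v i)
    (hS : ∀ i j, S i j = u (min i j) * v (max i j)) : TotallyNonneg S := by
  intro k r c hr hc
  set m := fun i => u i / v i
  have hm : Monotone m := fun i j hij => (div_le_div_iff₀ (hv i) (hv j)).2 (huv i j hij)
  have hS' : ∀ i j, S i j = v i * (v j * m (min i j)) := fun i j => by
    have := (hv i).ne'
    have := (hv j).ne'
    rcases le_total i j with h | h <;> simp [hS, m, h] <;> field_simp
  have hsub : S.submatrix r c =
      diagonal (v ∘ r) * (of fun a b => m (min (r a) (c b))) * diagonal (v ∘ c) := by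
    ext a b
    simp [hS', mul_comm, mul_left_comm]
  have hprod : ∀ s : Fin k → Fin n, 0 ≤ ∏ a, (v ∘ s) a :=
    fun s => Finset.prod_nonneg fun a _ => (hv _).le
  rw [hsub, det_mul, det_mul, det_diagonal, det_diagonal]
  exact mul_nonneg (mul_nonneg (hprod r)
    (det_comp_min_nonneg hm (fun i => div_nonneg (hu i) (hv i).le) hr.monotone hc.monotone))
    (hprod c)

theorem totallyNonneg_gcd_of_monotoneValuations {n : ℕ} {x : Fin n → ℕ} (hx : ∀ i, x i ≠ 0)
    (hmono : MonotoneValuations x) {S : Matrix (Fin n) (Fin n) ℝ}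
    (hS : ∀ i j, S i j = (Nat.gcd (x i) (x j) : ℝ)) : TotallyNonneg S := by
  obtain _ | n := n
  · exact totallyNonneg_of_eq_mul_min_max (u := 1) (v := 1) (fun _ => zero_le_one)
      (fun _ => one_pos) (by simp) fun i => i.elim0
  have hgcd : ∀ i j, 0 < Nat.gcd (x i) (x j) :=
    fun i j => Nat.gcd_pos_of_pos_left _ (Nat.pos_of_ne_zero (hx i))
  have hc : (0 : ℝ) < Nat.gcd (x 0) (x (Fin.last n)) := by exact_mod_cast hgcd _ _
  refine totallyNonneg_of_eq_mul_min_max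
    (u := fun i => (Nat.gcd (x i) (x (Fin.last n)) : ℝ) / Nat.gcd (x 0) (x (Fin.last n)))
    (v := fun i => (Nat.gcd (x 0) (x i) : ℝ)) (fun i => by positivity)
    (fun i => by exact_mod_cast hgcd _ _) (fun i j hij => ?_) (fun i j => ?_)
  · rw [div_mul_eq_mul_div, div_mul_eq_mul_div, div_le_div_iff_of_pos_right hc]
    exact_mod_cast Nat.mul_le_mul
      (Nat.le_of_dvd (hgcd _ _) (gcd_dvd_gcd_of_le_left hx hmono hij (Fin.le_last j)))
      (Nat.le_of_dvd (hgcd _ _) (gcd_dvd_gcd_of_le_right hx hmono (Fin.zero_le i) hij))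
  · have key := gcd_mul_gcd_eq_of_le hx hmono (Fin.zero_le (min i j)) min_le_max
      (Fin.le_last (max i j))
    have hsymm : Nat.gcd (x (min i j)) (x (max i j)) = Nat.gcd (x i) (x j) := by
      rcases le_total i j with h | h <;> simp [h, Nat.gcd_comm]
    rw [hS, ← hsymm, div_mul_eq_mul_div, eq_div_iff hc.ne', mul_comm]
    exact_mod_cast key

theorem gcd_matrix_TN_iff_monotone_valuations (n : ℕ) (x : Fin n → ℕ)
    (hx : ∀ i, 0 < x i)
    (S : Matrix (Fin n) (Fin n) ℝ)
    (hS : ∀ i j, S i j = (Nat.gcd (x i) (x j) : ℝ)) :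
    TotallyNonneg S ↔
      ∀ p : ℕ, p.Prime →
        (Monotone (fun i => (x i).factorization p) ∨
          Antitone (fun i => (x i).factorization p)) := by
  refine ⟨fun hTN p hp => ?_,
    fun hmono => totallyNonneg_gcd_of_monotoneValuations (fun i => (hx i).ne') hmono hS⟩
  by_contra! hnot
  obtain ⟨i, j, k, hij, hjk, hdent⟩ := not_monotone_not_antitone_iff_exists_lt_lt.1 hnot
  have hminor := hTN.mul_diag_le_mul hij hjk
  simp only [hS, Nat.gcd_self] at hminor
  exact (Nat.gcd_mul_gcd_lt_gcd_mul (hx i).ne' (hx j).ne' (hx k).ne' hdent).not_ge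
    (by exact_mod_cast hminor)
end

section
/- For n ≥ 3 and any vector X = (x_1,...,x_n) of positive integers, if the GCD matrix S(X) is TN_2, then gcd(x_i,x_k) * gcd(x_j,x_l) = gcd(x_i,x_l) * gcd(x_j,x_k) for all 1 ≤ i ≤ j ≤ k ≤ l ≤ n; hence S(X) is not totally positive. -/
/-- All minors of size at most 2 are nonnegative. -/
def TN2 {n : ℕ} (A : Matrix (Fin n) (Fin n) ℝ) : Prop :=
  ∀ (k : ℕ), k ≤ 2 → ∀ (r c : Fin k → Fin n), StrictMono r → StrictMono c →
    0 ≤ (A.submatrix r c).det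

/-- All square minors are (strictly) positive. -/
def TotallyPos {n : ℕ} (A : Matrix (Fin n) (Fin n) ℝ) : Prop :=
  ∀ (k : ℕ), 0 < k → ∀ (r c : Fin k → Fin n), StrictMono r → StrictMono c →
    0 < (A.submatrix r c).det

lemma sm2 {n : ℕ} {i j : Fin n} (h : i < j) : StrictMono ![i, j] := by
  intro a b hab
  fin_cases a <;> fin_cases b <;> simp_all

lemma det2 {n : ℕ} (S : Matrix (Fin n) (Fin n) ℝ) (i j k l : Fin n) :
    (S.submatrix ![i, j] ![k, l]).det = S i k * S j l - S i l * S j k := by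
  rw [Matrix.det_fin_two]
  simp [Matrix.submatrix_apply]

lemma gcd_mul_le (a b c : ℕ) (ha : 0 < a) (hb : 0 < b) :
    Nat.gcd a b * Nat.gcd b c ≤ b * Nat.gcd a c := by
  rw [← Nat.gcd_mul_lcm (Nat.gcd a b) (Nat.gcd b c), mul_comm b]
  apply Nat.mul_le_mul
  · exact Nat.le_of_dvd (Nat.gcd_pos_of_pos_left c ha)
      (Nat.dvd_gcd ((Nat.gcd_dvd_left _ _).trans (Nat.gcd_dvd_left a b))
        ((Nat.gcd_dvd_right _ _).trans (Nat.gcd_dvd_right b c)))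
  · exact Nat.le_of_dvd hb (Nat.lcm_dvd (Nat.gcd_dvd_right a b) (Nat.gcd_dvd_left b c))

lemma key {n : ℕ} (x : Fin n → ℕ) (hx : ∀ i, 0 < x i)
    (S : Matrix (Fin n) (Fin n) ℝ)
    (hS : ∀ i j, S i j = (Nat.gcd (x i) (x j) : ℝ))
    (hTN : TN2 S) {i j k : Fin n} (hij : i < j) (hjk : j < k) :
    Nat.gcd (x i) (x j) * Nat.gcd (x j) (x k) = x j * Nat.gcd (x i) (x k) := by
  have h := hTN 2 le_rfl ![i, j] ![j, k] (sm2 hij) (sm2 hjk)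
  rw [det2, hS, hS, hS, hS, sub_nonneg, Nat.gcd_self] at h
  have h2 : x j * Nat.gcd (x i) (x k) ≤ Nat.gcd (x i) (x j) * Nat.gcd (x j) (x k) := by
    rw [mul_comm]
    exact_mod_cast h
  exact le_antisymm (gcd_mul_le _ _ _ (hx i) (hx j)) h2

theorem gcd_matrix_not_TP (n : ℕ) (hn : 3 ≤ n) (x : Fin n → ℕ) (hx : ∀ i, 0 < x i)
    (S : Matrix (Fin n) (Fin n) ℝ)
    (hS : ∀ i j, S i j = (Nat.gcd (x i) (x j) : ℝ)) :
    (TN2 S → ∀ i j k l : Fin n, i ≤ j → j ≤ k → k ≤ l →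
      Nat.gcd (x i) (x k) * Nat.gcd (x j) (x l)
        = Nat.gcd (x i) (x l) * Nat.gcd (x j) (x k)) ∧
    ¬ TotallyPos S := by
  have main : TN2 S → ∀ i j k l : Fin n, i ≤ j → j ≤ k → k ≤ l →
      Nat.gcd (x i) (x k) * Nat.gcd (x j) (x l)
        = Nat.gcd (x i) (x l) * Nat.gcd (x j) (x k) := by
    intro hTN i j k l hij hjk hkl
    rcases eq_or_lt_of_le hij with rfl | hij
    · ring
    rcases eq_or_lt_of_le hkl with rfl | hkl
    · ring
    rcases eq_or_lt_of_le hjk with rfl | hjk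
    · -- j = k: use key i j l
      have hk := key x hx S hS hTN hij hkl
      rw [Nat.gcd_self, hk]
      ring
    · -- i < j < k < l
      have h1 := key x hx S hS hTN hij hjk
      have h2 := key x hx S hS hTN hij (hjk.trans hkl)
      apply Nat.eq_of_mul_eq_mul_left (hx j)
      calc x j * (Nat.gcd (x i) (x k) * Nat.gcd (x j) (x l))
          = (x j * Nat.gcd (x i) (x k)) * Nat.gcd (x j) (x l) := by ring
        _ = (Nat.gcd (x i) (x j) * Nat.gcd (x j) (x k)) * Nat.gcd (x j) (x l) := by rw [h1]
        _ = (Nat.gcd (x i) (x j) * Nat.gcd (x j) (x l)) * Nat.gcd (x j) (x k) := by ring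
        _ = (x j * Nat.gcd (x i) (x l)) * Nat.gcd (x j) (x k) := by rw [h2]
        _ = x j * (Nat.gcd (x i) (x l) * Nat.gcd (x j) (x k)) := by ring
  refine ⟨main, ?_⟩
  intro hTP
  have hTN : TN2 S := by
    intro k hk r c hr hc
    rcases Nat.eq_zero_or_pos k with rfl | hk0
    · simp [Matrix.det_isEmpty]
    · exact (hTP k hk0 r c hr hc).le
  have h3 : (3 : ℕ) ≤ n := hn
  set i0 : Fin n := ⟨0, by omega⟩
  set i1 : Fin n := ⟨1, by omega⟩
  set i2 : Fin n := ⟨2, by omega⟩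
  have h01 : i0 < i1 := by simp [i0, i1, Fin.lt_def]
  have h12 : i1 < i2 := by simp [i1, i2, Fin.lt_def]
  have heq := main hTN i0 i1 i1 i2 h01.le le_rfl h12.le
  have hd := hTP 2 (by norm_num) ![i0, i1] ![i1, i2] (sm2 h01) (sm2 h12)
  rw [det2, hS, hS, hS, hS] at hd
  have : (Nat.gcd (x i0) (x i1) * Nat.gcd (x i1) (x i2) : ℝ)
      = (Nat.gcd (x i0) (x i2) * Nat.gcd (x i1) (x i1) : ℝ) := by
    exact_mod_cast congrArg (Nat.cast : ℕ → ℝ) heq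
  push_cast at hd this
  linarith
end

section
/- Let X = (x_1,...,x_n) be positive integers such that for all 1 ≤ i ≤ j ≤ k ≤ n, gcd(x_i,x_j) * gcd(x_j,x_k) = x_j * gcd(x_i,x_k). Then for all 1 ≤ i ≤ n, gcd(x_i,x_n) = gcd(x_i, x_{i+1}, ..., x_n) and gcd(x_1,x_i) = gcd(x_1, x_2, ..., x_i). -/
theorem gcd_range_identities (n : ℕ) (x : Fin (n + 1) → ℕ) (hx : ∀ i, 0 < x i)
    (h : ∀ i j k : Fin (n + 1), i ≤ j → j ≤ k →
      Nat.gcd (x i) (x j) * Nat.gcd (x j) (x k) = x j * Nat.gcd (x i) (x k)) :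
    ∀ i : Fin (n + 1),
      Nat.gcd (x i) (x (Fin.last n)) = Finset.gcd (Finset.Icc i (Fin.last n)) x ∧
      Nat.gcd (x 0) (x i) = Finset.gcd (Finset.Icc 0 i) x := by
  have key : ∀ i j k : Fin (n + 1), i ≤ j → j ≤ k → Nat.gcd (x i) (x k) ∣ x j := by
    intro i j k hij hjk
    have heq := h i j k hij hjk
    have h1 : Nat.gcd (x i) (x j) * Nat.gcd (x j) (x k) ∣ x j * x j :=
      mul_dvd_mul (Nat.gcd_dvd_right _ _) (Nat.gcd_dvd_left _ _)
    rw [heq] at h1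
    exact (mul_dvd_mul_iff_left (hx j).ne').mp h1
  intro i
  constructor
  · apply Nat.dvd_antisymm
    · apply Finset.dvd_gcd
      intro j hj
      rw [Finset.mem_Icc] at hj
      exact key i j (Fin.last n) hj.1 hj.2
    · refine Nat.dvd_gcd (Finset.gcd_dvd ?_) (Finset.gcd_dvd ?_) <;>
        simp [Finset.mem_Icc, Fin.le_last]
  · apply Nat.dvd_antisymm
    · apply Finset.dvd_gcd
      intro j hj
      rw [Finset.mem_Icc] at hj
      exact key 0 j i hj.1 hj.2
    · refine Nat.dvd_gcd (Finset.gcd_dvd ?_) (Finset.gcd_dvd ?_) <;>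
        simp [Finset.mem_Icc, Fin.zero_le]
end

section
/- Let f : ℕ → ℝ be multiplicative (f(xy) = f(x)f(y) whenever gcd(x,y)=1) and satisfy f(x) ≤ f(y) whenever x divides y. If x_1 < ... < x_n are positive integers whose GCD matrix (gcd(x_i,x_j))_{i,j} is totally nonnegative, then the matrix (f(gcd(x_i,x_j)))_{i,j} is also totally nonnegative. -/
/-!
If `f 1 = 0` then `f` vanishes on positive integers; otherwise `f ≥ f 1 = 1` there.
For `i < j < l` the minor of the GCD matrix on rows `i, j` and columns `j, l` gives
`gcd(x_i, x_l) * x_j ≤ d * e` with `d = gcd(x_i, x_j)`, `e = gcd(x_j, x_l)`. Since `gcd(d, e)`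
divides `gcd(x_i, x_l)`, `lcm(d, e)` divides `x_j` and `gcd(d, e) * lcm(d, e) = d * e`, this forces
`gcd(d, e) = gcd(x_i, x_l)` and `lcm(d, e) = x_j`, so multiplicativity, in the form
`f d * f e = f (gcd d e) * f (lcm d e)`, gives `T i l * T j j = T i j * T j l`.
A positive symmetric matrix with these relations is `diag q * (t (min i j)) * diag q` with
`q i = T 0 i` and `t i = T i i / T 0 i ^ 2`, and `t` is monotone because of the principal minors
`T i j ^ 2 ≤ T i i * T j j`, which hold as `f` is monotone under divisibility. Finally, the
min-kernel `t (min (u a) (v b))` of a nonnegative monotone `t` is totally nonnegative: clearing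
the first column with the constant first row leaves the min-kernel of
`s ↦ t (max s (v 0)) - t (v 0)`.
-/

open Matrix

lemma apply_min_eq_sub_add {α : Type*} [LinearOrder α] (t : α → ℝ) (p : α) {q w : α}
    (hwq : w ≤ q) : t (min p q) = (t (max (min p q) w) - t w) + t (min p w) := by
  rcases le_total p w with h | h
  · rw [min_eq_left (h.trans hwq), max_eq_right h, min_eq_left h]
    ring
  · rw [max_eq_left (le_min h hwq), min_eq_right h]
    ring

namespace Matrix

section MinKernel

variable {α : Type*} [LinearOrder α]

theorem det_minKernel_succ_s19 {k : ℕ} (t : α → ℝ) {u v : Fin (k + 1) → α} (hv : Monotone v)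
    (h0 : u 0 ≤ v 0) :
    (of fun a b => t (min (u a) (v b))).det =
      t (u 0) *
        (of fun a b : Fin k => t (max (min (u a.succ) (v b.succ)) (v 0)) - t (v 0)).det := by
  have hrow0 : ∀ b, t (min (u 0) (v b)) = t (u 0) := fun b =>
    congrArg t (min_eq_left (h0.trans (hv (Fin.zero_le b))))
  by_cases ht0 : t (u 0) = 0
  · rw [ht0, zero_mul]
    exact det_eq_zero_of_row_eq_zero 0 fun b => by simp [hrow0, ht0]
  set B : Matrix (Fin (k + 1)) (Fin (k + 1)) ℝ := of (Fin.cons (fun _ => t (u 0))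
    fun a b => t (max (min (u a.succ) (v b)) (v 0)) - t (v 0))
  have hB : (of fun a b => t (min (u a) (v b))).det = B.det := by
    refine det_eq_of_forall_row_eq_smul_add_const
      (Fin.cons 0 fun a => t (min (u a.succ) (v 0)) / t (u 0)) 0 rfl fun a b => ?_
    cases a using Fin.cases with
    | zero => simp [B, hrow0]
    | succ a =>
      simp only [B, of_apply, Fin.cons_succ, Fin.cons_zero]
      rw [div_mul_cancel₀ _ ht0]
      exact apply_min_eq_sub_add t _ (hv (Fin.zero_le b))
  rw [hB, det_succ_column_zero, Fin.sum_univ_succ, Finset.sum_eq_zero fun a _ => by simp [B]]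
  simp only [B, Fin.val_zero, pow_zero, one_mul, of_apply, Fin.cons_zero, Fin.succAbove_zero,
    add_zero]
  rfl

theorem det_minKernel_nonneg_s19 {t : α → ℝ} (ht : Monotone t) (ht0 : ∀ s, 0 ≤ t s) {k : ℕ}
    {u v : Fin k → α} (hu : Monotone u) (hv : Monotone v) :
    0 ≤ (of fun a b => t (min (u a) (v b))).det := by
  induction k generalizing t with
  | zero => simp
  | succ k ih =>
    wlog h0 : u 0 ≤ v 0 generalizing u v
    · rw [← det_transpose]
      convert this hv hu (le_of_not_ge h0) using 3
      ext a b
      simp [min_comm]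
    rw [det_minKernel_succ_s19 t hv h0]
    refine mul_nonneg (ht0 _) (ih (t := fun s => t (max s (v 0)) - t (v 0)) ?_ ?_
      (hu.comp Fin.strictMono_succ.monotone) (hv.comp Fin.strictMono_succ.monotone))
    · exact fun s s' hs => sub_le_sub_right (ht (max_le_max_right _ hs)) _
    · exact fun s => sub_nonneg.2 (ht (le_max_right _ _))

end MinKernel

section MinKernelFactorization

variable {ι : Type*} {A : Matrix ι ι ℝ} {i₀ i j : ι}

lemma apply_eq_mul_div_sq_of_mul_eq_mul (hA : A i₀ i ≠ 0)
    (h : A i₀ j * A i i = A i₀ i * A i j) :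
    A i j = A i₀ i * A i₀ j * (A i i / A i₀ i ^ 2) := by
  field_simp
  linear_combination -h

lemma div_sq_le_div_sq_of_mul_eq_mul (hpos : ∀ i j, 0 < A i j)
    (hminor : A i j ^ 2 ≤ A i i * A j j) (h : A i₀ j * A i i = A i₀ i * A i j) :
    A i i / A i₀ i ^ 2 ≤ A j j / A i₀ j ^ 2 := by
  have := hpos i₀ i
  have := hpos i₀ j
  have := hpos i i
  rw [div_le_div_iff₀ (by positivity) (by positivity)]
  refine le_of_mul_le_mul_right ?_ (by positivity : 0 < A i i ^ 2)
  calc A i i * A i₀ j ^ 2 * A i i ^ 2 = A i i * A i₀ i ^ 2 * A i j ^ 2 := by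
        linear_combination A i i * (A i₀ j * A i i + A i₀ i * A i j) * h
    _ ≤ A i i * A i₀ i ^ 2 * (A i i * A j j) := by gcongr
    _ = A j j * A i₀ i ^ 2 * A i i ^ 2 := by ring

end MinKernelFactorization

end Matrix

theorem totallyNonneg_zero {n : ℕ} : TotallyNonneg (0 : Matrix (Fin n) (Fin n) ℝ) := by
  rintro (_ | k) r c - - <;> simp

theorem TotallyNonneg.mul_le_mul_of_lt {n : ℕ} {A : Matrix (Fin n) (Fin n) ℝ}
    (hA : TotallyNonneg A) {i j k l : Fin n} (hij : i < j) (hkl : k < l) :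
    A i l * A j k ≤ A i k * A j l := by
  have := hA 2 ![i, j] ![k, l] (by simp [hij]) (by simp [hkl])
  rwa [det_fin_two, sub_nonneg] at this

theorem totallyNonneg_of_mul_eq_mul {n : ℕ} {A : Matrix (Fin n) (Fin n) ℝ}
    (hpos : ∀ i j, 0 < A i j) (hsymm : ∀ i j, A i j = A j i)
    (hrel : ∀ i j l, i < j → j < l → A i l * A j j = A i j * A j l)
    (hminor : ∀ i j, A i j ^ 2 ≤ A i i * A j j) : TotallyNonneg A := by
  rintro (_ | k) r c hr hc
  · simp
  obtain ⟨m, rfl⟩ := Nat.exists_eq_add_one_of_ne_zero (r 0).pos.ne'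
  have hrel0 : ∀ i j, i ≤ j → A 0 j * A i i = A 0 i * A i j := by
    intro i j hij
    rcases (Fin.zero_le i).eq_or_lt with rfl | h0i
    · ring
    rcases hij.eq_or_lt with rfl | hij
    · ring
    exact hrel 0 i j h0i hij
  set t : Fin (m + 1) → ℝ := fun i => A i i / A 0 i ^ 2
  have hA : ∀ i j, A i j = A 0 i * A 0 j * t (min i j) := by
    intro i j
    rcases le_total i j with hij | hji
    · rw [min_eq_left hij]
      exact apply_eq_mul_div_sq_of_mul_eq_mul (hpos 0 i).ne' (hrel0 i j hij)
    · rw [min_eq_right hji, hsymm, mul_comm (A 0 i)]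
      exact apply_eq_mul_div_sq_of_mul_eq_mul (hpos 0 j).ne' (hrel0 j i hji)
  have ht : Monotone t := fun i j hij =>
    div_sq_le_div_sq_of_mul_eq_mul hpos (hminor i j) (hrel0 i j hij)
  have hsub : A.submatrix r c = diagonal (fun a => A 0 (r a)) *
      (of fun a b => t (min (r a) (c b))) * diagonal (fun b => A 0 (c b)) := by
    ext a b
    rw [submatrix_apply, hA, mul_diagonal, diagonal_mul, of_apply]
    ring
  rw [hsub, det_mul, det_mul, det_diagonal, det_diagonal]
  have hq : ∀ i, 0 ≤ A 0 i := fun i => (hpos 0 i).le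
  have ht0 : ∀ i, 0 ≤ t i := fun i => div_nonneg (hpos i i).le (sq_nonneg _)
  exact mul_nonneg (mul_nonneg (Finset.prod_nonneg fun a _ => hq _)
    (det_minKernel_nonneg_s19 ht ht0 hr.monotone hc.monotone)) (Finset.prod_nonneg fun b _ => hq _)

theorem Nat.gcd_gcd_eq_and_lcm_gcd_eq {a b c : ℕ} (hb : 0 < b) (hac : 0 < gcd a c)
    (h : gcd a c * b ≤ gcd a b * gcd b c) :
    gcd (gcd a b) (gcd b c) = gcd a c ∧ lcm (gcd a b) (gcd b c) = b := by
  have hG : gcd (gcd a b) (gcd b c) ≤ gcd a c :=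
    le_of_dvd hac (gcd_dvd_gcd (gcd_dvd_left a b) (gcd_dvd_right b c))
  have hL : lcm (gcd a b) (gcd b c) ≤ b :=
    le_of_dvd hb (lcm_dvd (gcd_dvd_right a b) (gcd_dvd_left b c))
  have hGL := gcd_mul_lcm (gcd a b) (gcd b c)
  constructor <;> nlinarith

theorem apply_mul_apply_eq_apply_gcd_mul_apply_lcm {R : Type*} [CommMonoidWithZero R]
    {f : ℕ → R} (h1 : f 1 = 1)
    (hmul : ∀ x y : ℕ, 0 < x → 0 < y → Nat.Coprime x y → f (x * y) = f x * f y)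
    {a b : ℕ} (ha : a ≠ 0) (hb : b ≠ 0) :
    f a * f b = f (Nat.gcd a b) * f (Nat.lcm a b) := by
  let g : ArithmeticFunction R := ⟨fun m => if m = 0 then 0 else f m, rfl⟩
  have hg : g.IsMultiplicative := ArithmeticFunction.IsMultiplicative.iff_ne_zero.2
    ⟨by simp [g, h1], fun hm hn hmn => by
      simp [g, hm, hn, hmul _ _ (Nat.pos_of_ne_zero hm) (Nat.pos_of_ne_zero hn) hmn]⟩
  simpa [g, ha, hb, Nat.lcm_ne_zero ha hb, mul_comm] using
    (hg.lcm_apply_mul_gcd_apply (x := a) (y := b)).symm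

theorem multiplicative_preserves_gcd_TN_general (f : ℕ → ℝ)
    (hmul : ∀ x y : ℕ, 0 < x → 0 < y → Nat.Coprime x y → f (x * y) = f x * f y)
    (hmono : ∀ x y : ℕ, 0 < x → 0 < y → x ∣ y → f x ≤ f y)
    (n : ℕ) (x : Fin n → ℕ) (hx : ∀ i, 0 < x i)
    (S : Matrix (Fin n) (Fin n) ℝ)
    (hS : ∀ i j, S i j = (Nat.gcd (x i) (x j) : ℝ))
    (hTN : TotallyNonneg S)
    (T : Matrix (Fin n) (Fin n) ℝ)
    (hT : ∀ i j, T i j = f (Nat.gcd (x i) (x j))) :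
    TotallyNonneg T := by
  have hgcd : ∀ i j, 0 < Nat.gcd (x i) (x j) := fun i j => Nat.gcd_pos_of_pos_left _ (hx i)
  have hf11 : f 1 * f 1 = f 1 := by
    simpa using (hmul 1 1 one_pos one_pos (Nat.coprime_one_left 1)).symm
  rcases IsIdempotentElem.iff_eq_zero_or_one.1 hf11 with h0 | h1
  · have hT0 : T = 0 := by
      ext i j
      rw [hT, ← mul_one (Nat.gcd _ _), hmul _ 1 (hgcd i j) one_pos (Nat.coprime_one_right _), h0,
        mul_zero, Matrix.zero_apply]
    exact hT0 ▸ totallyNonneg_zero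
  have hfpos : ∀ m, 0 < m → 0 < f m := fun m hm =>
    zero_lt_one.trans_le (h1 ▸ hmono 1 m one_pos hm (one_dvd m))
  refine totallyNonneg_of_mul_eq_mul (fun i j => hT i j ▸ hfpos _ (hgcd i j))
    (fun i j => by rw [hT, hT, Nat.gcd_comm]) (fun i j l hij hjl => ?_) (fun i j => ?_)
  · have hS2 := hTN.mul_le_mul_of_lt hij hjl
    simp only [hS, Nat.gcd_self] at hS2
    obtain ⟨hg, hl⟩ := Nat.gcd_gcd_eq_and_lcm_gcd_eq (hx j) (hgcd i l) (by exact_mod_cast hS2)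
    simp only [hT, Nat.gcd_self]
    rw [apply_mul_apply_eq_apply_gcd_mul_apply_lcm h1 hmul (hgcd i j).ne' (hgcd j l).ne', hg, hl]
  · simp only [hT, Nat.gcd_self, sq]
    exact mul_le_mul (hmono _ _ (hgcd i j) (hx i) (Nat.gcd_dvd_left _ _))
      (hmono _ _ (hgcd i j) (hx j) (Nat.gcd_dvd_right _ _)) (hfpos _ (hgcd i j)).le
      (hfpos _ (hx i)).le

theorem multiplicative_preserves_gcd_TN (f : ℕ → ℝ)
    (hmul : ∀ x y : ℕ, 0 < x → 0 < y → Nat.Coprime x y → f (x * y) = f x * f y)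
    (hmono : ∀ x y : ℕ, 0 < x → 0 < y → x ∣ y → f x ≤ f y)
    (n : ℕ) (x : Fin n → ℕ) (hx : ∀ i, 0 < x i) (hsm : StrictMono x)
    (S : Matrix (Fin n) (Fin n) ℝ)
    (hS : ∀ i j, S i j = (Nat.gcd (x i) (x j) : ℝ))
    (hTN : TotallyNonneg S)
    (T : Matrix (Fin n) (Fin n) ℝ)
    (hT : ∀ i j, T i j = f (Nat.gcd (x i) (x j))) :
    TotallyNonneg T :=
  multiplicative_preserves_gcd_TN_general f hmul hmono n x hx S hS hTN T hT
end
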